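/- Let 𝔤 = 𝔤_{3.1} ⊕ 𝔤₁ be the 4-dimensional real Lie algebra with basis e₁,...,e₄ and only nonzero bracket [e₂,e₃] = e₁. A 4×4 real matrix R equals η·Id + D for some η ∈ ℝ and some derivation D of 𝔤 if and only if R₂₁ = R₃₁ = R₄₁ = R₂₄ = R₃₄ = 0. In this case η = R₂₂ + R₃₃ − R₁₁. -/

import Mathlib

open Matrix

/-- The Lie bracket of the Lie algebra, in coordinates. -/
def br (x y : Fin 4 → ℝ) : Fin 4 → ℝ :=
  ![(x 1 * y 2 - x 2 * y 1), (0:ℝ), (0:ℝ), (0:ℝ)]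

/-- `D` (acting via `mulVec`) is a derivation of the bracket. -/
def IsDer (D : Matrix (Fin 4) (Fin 4) ℝ) : Prop :=
  ∀ x y : Fin 4 → ℝ, D.mulVec (br x y) = br (D.mulVec x) y + br x (D.mulVec y)

/-
Since `e₁` spans the derived algebra and `e₁, e₄` the centre, a derivation `D` must preserve
both, which kills the entries `D₂₁, D₃₁, D₄₁, D₂₄, D₃₄`; applying `D` to `[e₂, e₃] = e₁` gives
`D₁₁ = D₂₂ + D₃₃`. Conversely these conditions make the derivation identity hold coordinatewise.
-/

theorem isDer_iff (D : Matrix (Fin 4) (Fin 4) ℝ) :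
    IsDer D ↔ D 1 0 = 0 ∧ D 2 0 = 0 ∧ D 3 0 = 0 ∧ D 1 3 = 0 ∧ D 2 3 = 0 ∧
      D 0 0 = D 1 1 + D 2 2 := by
  constructor
  · intro hD
    have hD₂₃ := hD ![0, 1, 0, 0] ![0, 0, 1, 0]
    have hD₄₃ := hD ![0, 0, 0, 1] ![0, 0, 1, 0]
    have hD₄₂ := hD ![0, 0, 0, 1] ![0, 1, 0, 0]
    have e₀ := congrFun hD₂₃ 0
    have e₁ := congrFun hD₂₃ 1
    have e₂ := congrFun hD₂₃ 2
    have e₃ := congrFun hD₂₃ 3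
    have e₁₃ := congrFun hD₄₃ 0
    have e₂₃ := congrFun hD₄₂ 0
    simp only [mulVec, dotProduct, Fin.isValue, br, cons_val_one, cons_val_zero, cons_val,
      mul_one, mul_zero, sub_zero, Fin.sum_univ_four, add_zero, zero_add, one_mul, zero_mul,
      Pi.add_apply, sub_self, zero_sub, zero_eq_neg] at e₀ e₁ e₂ e₃ e₁₃ e₂₃
    exact ⟨e₁, e₂, e₃, e₁₃.symm, by linarith, by linarith⟩
  · rintro ⟨h₁₀, h₂₀, h₃₀, h₁₃, h₂₃, h₀₀⟩ x y
    funext i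
    fin_cases i <;>
      simp [mulVec, dotProduct, br, Fin.sum_univ_four, h₁₀, h₂₀, h₃₀, h₁₃, h₂₃, h₀₀]
    ring

theorem isDer_sub_smul_one_iff (R : Matrix (Fin 4) (Fin 4) ℝ) (η : ℝ) :
    IsDer (R - η • 1) ↔ R 1 0 = 0 ∧ R 2 0 = 0 ∧ R 3 0 = 0 ∧ R 1 3 = 0 ∧ R 2 3 = 0 ∧
      η = R 1 1 + R 2 2 - R 0 0 := by
  rw [isDer_iff]
  simp only [Matrix.sub_apply, Matrix.smul_apply, one_apply, smul_eq_mul]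
  simp +decide only [if_true, if_false, mul_one, mul_zero, sub_zero]
  constructor
  · rintro ⟨h₁, h₂, h₃, h₄, h₅, h₆⟩
    exact ⟨h₁, h₂, h₃, h₄, h₅, by linarith⟩
  · rintro ⟨h₁, h₂, h₃, h₄, h₅, h₆⟩
    exact ⟨h₁, h₂, h₃, h₄, h₅, by linarith⟩

theorem exists_isDer_eq_smul_one_add_iff (R : Matrix (Fin 4) (Fin 4) ℝ) (η : ℝ) :
    (∃ D, IsDer D ∧ R = η • (1 : Matrix (Fin 4) (Fin 4) ℝ) + D) ↔ IsDer (R - η • 1) :=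
  ⟨fun ⟨D, hD, hR⟩ => by rwa [hR, add_sub_cancel_left],
    fun h => ⟨R - η • 1, h, (add_sub_cancel _ _).symm⟩⟩

theorem stmt_2 (R : Matrix (Fin 4) (Fin 4) ℝ) :
    ((∃ (η : ℝ) (D : Matrix (Fin 4) (Fin 4) ℝ), IsDer D ∧
        R = η • (1 : Matrix (Fin 4) (Fin 4) ℝ) + D) ↔
      (R 1 0 = 0 ∧ R 2 0 = 0 ∧ R 3 0 = 0 ∧ R 1 3 = 0 ∧ R 2 3 = 0)) ∧
    (∀ (η : ℝ) (D : Matrix (Fin 4) (Fin 4) ℝ), IsDer D →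
      R = η • (1 : Matrix (Fin 4) (Fin 4) ℝ) + D → η = R 1 1 + R 2 2 - R 0 0) := by
  refine ⟨?_, fun η D hD hR => ?_⟩
  · simp only [exists_isDer_eq_smul_one_add_iff, isDer_sub_smul_one_iff]
    exact ⟨fun ⟨_, h₁, h₂, h₃, h₄, h₅, _⟩ => ⟨h₁, h₂, h₃, h₄, h₅⟩,
      fun ⟨h₁, h₂, h₃, h₄, h₅⟩ => ⟨_, h₁, h₂, h₃, h₄, h₅, rfl⟩⟩
  · have hRη := (exists_isDer_eq_smul_one_add_iff R η).1 ⟨D, hD, hR⟩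
    exact ((isDer_sub_smul_one_iff R η).1 hRη).2.2.2.2.2
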